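/- Let ℓ be a prime and G a finite ℓ-group, and let τ ∈ G with τ ≠ 1. Define φ_τ : N_G(τ) → (ℤ/o(τ)ℤ)ˣ by φ_τ(ρ) = α where ρτρ⁻¹ = τ^α. Then the image φ_τ(N_G(τ)) is the unique subgroup of order #(N_G(τ)/C_G(τ)) of the ℓ-Sylow subgroup of the cyclic group (ℤ/o(τ)ℤ)ˣ; explicitly, setting e_τ = o(τ)/#(N_G(τ)/C_G(τ)), one has ℓ ∣ e_τ and φ_τ(N_G(τ)) = {1 + e_τ k mod o(τ) : k ∈ ℤ}. -/

import Mathlib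

/-- The image of the map `φ_τ` (sending `ρ` with `ρτρ⁻¹ = τ^α` to the unit `α`)
restricted to a set `S` of elements normalizing `⟨τ⟩`. -/
def phiImage {G : Type*} [Group G] (τ : G) (S : Set G) : Set (ZMod (orderOf τ))ˣ :=
  {α | ∃ ρ ∈ S, ρ * τ * ρ⁻¹ = τ ^ ((α : ZMod (orderOf τ)).val)}

/-! The map φ_τ is a homomorphism `N_G(τ) → (ZMod o(τ))ˣ` with kernel `C_G(τ) ∩ N_G(τ)`, so its
image is an ℓ-subgroup of order `m = #(N_G(τ)/C_G(τ))`. Since ℓ is odd and `o(τ) = ℓ^v`, the group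
`(ZMod ℓ^v)ˣ` is cyclic of order `ℓ^(v-1)(ℓ-1)`; hence `m = ℓ^s` with `s < v`, and a subgroup of
`(ZMod ℓ^v)ˣ` is determined by its order. The kernel of the reduction
`(ZMod ℓ^v)ˣ → (ZMod ℓ^(v-s))ˣ` has order `ℓ^s` and consists of the units `1 + ℓ^(v-s) k`,
so it is the image. -/

open Subgroup

theorem Subgroup.eq_ker_powMonoidHom_natCard {G : Type*} [CommGroup G] [Finite G] [IsCyclic G]
    (H : Subgroup G) : H = (powMonoidHom (Nat.card H) : G →* G).ker := by
  refine eq_of_le_of_card_ge (fun x hx => ?_) ?_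
  · rw [MonoidHom.mem_ker, powMonoidHom_apply, ← orderOf_dvd_iff_pow_eq_one]
    exact H.orderOf_dvd_natCard hx
  · rw [IsCyclic.card_powMonoidHom_ker, Nat.gcd_eq_right (card_subgroup_dvd_card H)]

theorem Subgroup.eq_of_natCard_eq_of_isCyclic {G : Type*} [CommGroup G] [Finite G] [IsCyclic G]
    {H K : Subgroup G} (h : Nat.card H = Nat.card K) : H = K := by
  rw [H.eq_ker_powMonoidHom_natCard, K.eq_ker_powMonoidHom_natCard, h]

namespace ZMod

lemma castHom_eq_zero_iff {n e : ℕ} (h : e ∣ n) (y : ZMod n) :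
    castHom h (ZMod e) y = 0 ↔ ∃ k : ZMod n, y = e * k := by
  constructor
  · intro hy
    obtain ⟨a, rfl⟩ := intCast_surjective y
    rw [map_intCast, intCast_zmod_eq_zero_iff_dvd] at hy
    obtain ⟨b, rfl⟩ := hy
    exact ⟨b, by push_cast; ring⟩
  · rintro ⟨k, rfl⟩
    rw [map_mul, map_natCast, natCast_self, zero_mul]

lemma mem_ker_unitsMap_iff {n e : ℕ} (h : e ∣ n) (α : (ZMod n)ˣ) :
    α ∈ (unitsMap h).ker ↔ ∃ k : ZMod n, (α : ZMod n) = 1 + e * k := by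
  have key := castHom_eq_zero_iff h ((α : ZMod n) - 1)
  rw [map_sub, map_one, sub_eq_zero, castHom_apply] at key
  rw [MonoidHom.mem_ker, Units.ext_iff, unitsMap_val, Units.val_one, key]
  simp only [sub_eq_iff_eq_add']

lemma card_ker_unitsMap_mul_totient {n e : ℕ} [NeZero n] (h : e ∣ n) :
    Nat.card (unitsMap h).ker * e.totient = n.totient := by
  have : NeZero e := ⟨fun he => NeZero.ne n (Nat.eq_zero_of_zero_dvd (he ▸ h))⟩
  have hindex : (unitsMap h).ker.index = e.totient := by
    rw [index_ker, (unitsMap h).range_eq_top_of_surjective (unitsMap_surjective h), card_top,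
      Nat.card_eq_fintype_card, card_units_eq_totient]
  rw [← hindex, card_mul_index, Nat.card_eq_fintype_card, card_units_eq_totient]

lemma card_ker_unitsMap_prime_pow {p a b : ℕ} (hp : p.Prime) (ha : a ≠ 0) (hab : a ≤ b) :
    Nat.card (unitsMap (pow_dvd_pow p hab)).ker = p ^ (b - a) := by
  have : NeZero (p ^ b) := ⟨pow_ne_zero _ hp.ne_zero⟩
  have h := card_ker_unitsMap_mul_totient (pow_dvd_pow p hab)
  rw [Nat.totient_prime_pow hp (by omega), Nat.totient_prime_pow hp (by omega)] at h
  have hsplit : p ^ (b - 1) * (p - 1) = p ^ (b - a) * (p ^ (a - 1) * (p - 1)) := by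
    rw [← mul_assoc, ← pow_add]
    congr 2
    omega
  have hpos : 0 < p ^ (a - 1) * (p - 1) :=
    Nat.mul_pos (pow_pos hp.pos _) (Nat.sub_pos_of_lt hp.one_lt)
  exact Nat.eq_of_mul_eq_mul_right hpos (h.trans hsplit)

lemma exists_natCard_eq_pow_lt_of_isPGroup {p v : ℕ} [hp : Fact p.Prime] (hv : v ≠ 0)
    {H : Subgroup (ZMod (p ^ v))ˣ} (hH : IsPGroup p H) : ∃ s < v, Nat.card H = p ^ s := by
  obtain ⟨s, hs⟩ := IsPGroup.iff_card.mp hH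
  have : NeZero (p ^ v) := ⟨pow_ne_zero _ hp.out.ne_zero⟩
  have hdvd : p ^ s ∣ p ^ (v - 1) * (p - 1) := by
    rw [← hs, ← Nat.totient_prime_pow hp.out (Nat.pos_of_ne_zero hv), ← card_units_eq_totient,
      ← Nat.card_eq_fintype_card]
    exact card_subgroup_dvd_card H
  have hcop : (p ^ s).Coprime (p - 1) := Nat.Coprime.pow_left s
    ((Nat.coprime_self_sub_right hp.out.one_lt.le).mpr (Nat.coprime_one_right p))
  refine ⟨s, ?_, hs⟩
  have := (Nat.pow_dvd_pow_iff_le_right hp.out.one_lt).mp (hcop.dvd_of_dvd_mul_right hdvd)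
  omega

theorem coe_eq_setOf_one_add_mul_of_isPGroup {p n v : ℕ} [hp : Fact p.Prime] (hp2 : p ≠ 2)
    (hn : n = p ^ v) (hv : v ≠ 0) (H : Subgroup (ZMod n)ˣ) (hH : IsPGroup p H) :
    p ∣ n / Nat.card H ∧
      (H : Set (ZMod n)ˣ) =
        {α : (ZMod n)ˣ | ∃ k : ZMod n, (α : ZMod n) = 1 + (n / Nat.card H : ℕ) * k} := by
  subst hn
  have := isCyclic_units_of_prime_pow p hp.out hp2 v
  obtain ⟨s, hsv, hs⟩ := exists_natCard_eq_pow_lt_of_isPGroup hv hH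
  rw [hs, Nat.pow_div hsv.le hp.out.pos]
  refine ⟨dvd_pow_self p (by omega), ?_⟩
  have hker : H = (unitsMap (pow_dvd_pow p (Nat.sub_le v s))).ker := by
    refine eq_of_natCard_eq_of_isCyclic ?_
    rw [card_ker_unitsMap_prime_pow hp.out (by omega) (Nat.sub_le v s), hs,
      Nat.sub_sub_self hsv.le]
  ext α
  rw [hker]
  exact mem_ker_unitsMap_iff _ α

end ZMod

section ConjExponent

variable {G : Type*} [Group G] {τ : G}

lemma zpow_eq_zpow_iff_intCast_eq {a b : ℤ} : τ ^ a = τ ^ b ↔ (a : ZMod (orderOf τ)) = b := by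
  rw [zpow_eq_zpow_iff_modEq, ZMod.intCast_eq_intCast_iff]

lemma zpow_eq_pow_val_intCast [NeZero (orderOf τ)] (a : ℤ) :
    τ ^ a = τ ^ (a : ZMod (orderOf τ)).val := by
  rw [← zpow_natCast, zpow_eq_zpow_iff_intCast_eq, Int.cast_natCast, ZMod.natCast_zmod_val]

lemma exists_conj_eq_zpow_of_mem_normalizer {ρ : G} (h : ρ ∈ normalizer (zpowers τ : Set G)) :
    ∃ a : ℤ, ρ * τ * ρ⁻¹ = τ ^ a := by
  obtain ⟨a, ha⟩ := mem_zpowers_iff.mp ((mem_normalizer_iff.mp h τ).mp (mem_zpowers τ))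
  exact ⟨a, ha.symm⟩

variable (τ) in
noncomputable def conjExponent (ρ : normalizer (zpowers τ : Set G)) : ZMod (orderOf τ) :=
  (exists_conj_eq_zpow_of_mem_normalizer ρ.2).choose

lemma conjExponent_eq_intCast {ρ : normalizer (zpowers τ : Set G)} {a : ℤ}
    (h : ρ * τ * (ρ : G)⁻¹ = τ ^ a) : conjExponent τ ρ = a := by
  rw [conjExponent, ← zpow_eq_zpow_iff_intCast_eq,
    ← (exists_conj_eq_zpow_of_mem_normalizer ρ.2).choose_spec, h]

lemma conjExponent_one : conjExponent τ 1 = 1 := by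
  rw [conjExponent_eq_intCast (a := 1) (by simp), Int.cast_one]

lemma conjExponent_mul (ρ σ : normalizer (zpowers τ : Set G)) :
    conjExponent τ (ρ * σ) = conjExponent τ ρ * conjExponent τ σ := by
  obtain ⟨a, ha⟩ := exists_conj_eq_zpow_of_mem_normalizer ρ.2
  obtain ⟨b, hb⟩ := exists_conj_eq_zpow_of_mem_normalizer σ.2
  rw [conjExponent_eq_intCast ha, conjExponent_eq_intCast hb, ← Int.cast_mul]
  refine conjExponent_eq_intCast ?_
  calc ((ρ * σ : normalizer (zpowers τ : Set G)) : G) * τ * ((ρ * σ : normalizer _) : G)⁻¹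
      = ρ * (σ * τ * (σ : G)⁻¹) * (ρ : G)⁻¹ := by rw [Subgroup.coe_mul]; group
    _ = (ρ * τ * (ρ : G)⁻¹) ^ b := by rw [hb, conj_zpow]
    _ = τ ^ (a * b) := by rw [ha, zpow_mul]

variable (τ) in
/-- The map `φ_τ` of the paper. -/
noncomputable def conjExponentHom : normalizer (zpowers τ : Set G) →* (ZMod (orderOf τ))ˣ :=
  MonoidHom.toHomUnits
    { toFun := conjExponent τ
      map_one' := conjExponent_one
      map_mul' := conjExponent_mul }

lemma coe_conjExponentHom (ρ : normalizer (zpowers τ : Set G)) :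
    (conjExponentHom τ ρ : ZMod (orderOf τ)) = conjExponent τ ρ := rfl

lemma coe_range_conjExponentHom [NeZero (orderOf τ)] :
    ((conjExponentHom τ).range : Set (ZMod (orderOf τ))ˣ) =
      phiImage τ (normalizer (zpowers τ : Set G) : Set G) := by
  ext α
  constructor
  · rintro ⟨ρ, rfl⟩
    obtain ⟨a, ha⟩ := exists_conj_eq_zpow_of_mem_normalizer ρ.2
    refine ⟨ρ, ρ.2, ?_⟩
    rw [coe_conjExponentHom, conjExponent_eq_intCast ha, ← zpow_eq_pow_val_intCast, ha]
  · rintro ⟨ρ, hρ, hα⟩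
    refine ⟨⟨ρ, hρ⟩, Units.ext ?_⟩
    rw [coe_conjExponentHom, conjExponent_eq_intCast (a := (α : ZMod (orderOf τ)).val)
      (by rw [hα, zpow_natCast]), Int.cast_natCast, ZMod.natCast_zmod_val]

lemma ker_conjExponentHom :
    (conjExponentHom τ).ker = (centralizer {τ}).subgroupOf (normalizer (zpowers τ : Set G)) := by
  ext ρ
  obtain ⟨a, ha⟩ := exists_conj_eq_zpow_of_mem_normalizer ρ.2
  rw [MonoidHom.mem_ker, mem_subgroupOf, mem_centralizer_singleton_iff, Units.ext_iff,
    coe_conjExponentHom, Units.val_one, conjExponent_eq_intCast ha, ← Int.cast_one,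
    ← zpow_eq_zpow_iff_intCast_eq, ← ha, zpow_one, mul_inv_eq_iff_eq_mul, eq_comm]

lemma natCard_range_conjExponentHom :
    Nat.card (conjExponentHom τ).range =
      (centralizer {τ}).relIndex (normalizer (zpowers τ : Set G)) := by
  rw [← index_ker, ker_conjExponentHom, relIndex]

end ConjExponent

theorem stmt11_general {G : Type*} [Group G] (ℓ : ℕ) (hℓ : ℓ.Prime) (hodd : Odd ℓ)
    (hG : IsPGroup ℓ G) (τ : G) (hτ : τ ≠ 1) :
    ℓ ∣ orderOf τ / ((Subgroup.centralizer {τ}).relIndex (Subgroup.normalizer (Subgroup.zpowers τ : Set G))) ∧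
    phiImage τ ((Subgroup.normalizer (Subgroup.zpowers τ : Set G)) : Set G) =
      {α : (ZMod (orderOf τ))ˣ | ∃ k : ZMod (orderOf τ),
        (α : ZMod (orderOf τ)) = 1 +
          (orderOf τ / ((Subgroup.centralizer {τ}).relIndex
            (Subgroup.normalizer (Subgroup.zpowers τ : Set G))) : ℕ) * k} := by
  have := Fact.mk hℓ
  obtain ⟨v, hv⟩ := hG.exists_orderOf_eq_pow τ
  have hv0 : v ≠ 0 := by
    rintro rfl
    exact hτ (orderOf_eq_one_iff.mp (by rw [hv, pow_zero]))
  have : NeZero (orderOf τ) := ⟨hv ▸ pow_ne_zero v hℓ.ne_zero⟩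
  have hrange : IsPGroup ℓ (conjExponentHom τ).range :=
    (hG.to_subgroup _).of_surjective _ (conjExponentHom τ).rangeRestrict_surjective
  rw [← coe_range_conjExponentHom, ← natCard_range_conjExponentHom]
  exact ZMod.coe_eq_setOf_one_add_mul_of_isPGroup (hodd.ne_two_of_dvd_nat dvd_rfl) hv hv0 _ hrange

theorem stmt11 {G : Type*} [Group G] [Finite G] (ℓ : ℕ) (hℓ : ℓ.Prime) (hodd : Odd ℓ)
    (hG : IsPGroup ℓ G) (τ : G) (hτ : τ ≠ 1) :
    ℓ ∣ orderOf τ / ((Subgroup.centralizer {τ}).relIndex (Subgroup.normalizer (Subgroup.zpowers τ : Set G))) ∧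
    phiImage τ ((Subgroup.normalizer (Subgroup.zpowers τ : Set G)) : Set G) =
      {α : (ZMod (orderOf τ))ˣ | ∃ k : ZMod (orderOf τ),
        (α : ZMod (orderOf τ)) = 1 +
          (orderOf τ / ((Subgroup.centralizer {τ}).relIndex
            (Subgroup.normalizer (Subgroup.zpowers τ : Set G))) : ℕ) * k} :=
  stmt11_general ℓ hℓ hodd hG τ hτ
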